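/- arXiv:0904.0467 — 7 statements merged into one kernel-verified Lean document; each statement's English description precedes it below -/
import Mathlib

section
/- Let H be a free abelian group of rank 2g equipped with a nondegenerate alternating bilinear form (a symplectic Z-module), and let x be a primitive vector in H. Let i : H → ∧³H be the map h ↦ h ∧ ω, where ω is the canonical element associated to a symplectic basis. Then the intersection of ∧³(x^⊥) with i(H) inside ∧³H equals the infinite cyclic subgroup generated by i(x). -/
open ExteriorAlgebra

/-!
A linear form `φ ∧ ψ ∧ χ` on `∧³H` with `φ = B(x, ·)` vanishes on `∧³(x^⊥)`. Evaluated on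
`h ∧ ω`, the forms `B(x, ·) ∧ B(z, ·) ∧ B(y, ·)`, where `B(x, y) = 1`, force
`h = B(x, h) y - B(y, h) x` by nondegeneracy, and the sum over the symplectic basis of
`B(x, ·) ∧ B(aᵢ, ·) ∧ B(bᵢ, ·)` gives `(g - 1) B(x, h) = 0`. So `h` is a multiple of `x` unless
`g = 1`, in which case `∧³H = 0`. Conversely
`x ∧ ω = ∑ᵢ x ∧ (aᵢ - B(x, aᵢ) y) ∧ (bᵢ - B(x, bᵢ) y)` lies in `∧³(x^⊥)`.
-/

namespace ExteriorAlgebra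

variable {R M : Type*} [CommRing R] [AddCommGroup M] [Module R M]

theorem ι_mul_ι_mul_ι_eq_ιMulti (u v w : M) :
    ι R u * ι R v * ι R w = ιMulti R 3 ![u, v, w] := by
  simp [ιMulti_apply, mul_assoc]

theorem ι_mul_ι_mul_ι_self (u v : M) : ι R u * ι R v * ι R u = 0 := by
  rw [ι_mul_ι_mul_ι_eq_ιMulti]
  exact (ιMulti R 3).map_eq_zero_of_eq _ (i := 0) (j := 2) rfl (by decide)

theorem ι_mul_ι_mul_ι_eq_zero_of_mem_span_pair {u v w : M}
    (hu : u ∈ Submodule.span R {v, w}) : ι R u * ι R v * ι R w = 0 := by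
  obtain ⟨a, b, rfl⟩ := Submodule.mem_span_pair.mp hu
  simp [add_mul, ι_mul_ι_mul_ι_self]

theorem ι_mul_ι_sub_smul_mul_ι_sub_smul (x y a b : M) (α β : R) :
    ι R x * ι R (a - α • y) * ι R (b - β • y) =
      ι R x * ι R a * ι R b + ι R x * ι R y * ι R (β • a - α • b) := by
  have hay : ι R a * ι R y = -(ι R y * ι R a) := eq_neg_of_add_eq_zero_left (ι_add_mul_swap a y)
  simp only [map_sub, map_smul, mul_sub, sub_mul, mul_smul_comm, smul_mul_assoc,
    mul_assoc, hay, ι_sq_zero, mul_zero, smul_zero, mul_neg]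
  module

noncomputable def wedgeForm3 (φ ψ χ : Module.Dual R M) : ExteriorAlgebra R M →ₗ[R] R :=
  liftAlternating
    (Pi.single 3 (Matrix.detRowAlternating.compLinearMap (LinearMap.pi ![φ, ψ, χ])))

theorem wedgeForm3_ι_mul_ι_mul_ι (φ ψ χ : Module.Dual R M) (u v w : M) :
    wedgeForm3 φ ψ χ (ι R u * ι R v * ι R w) =
      φ u * (ψ v * χ w - ψ w * χ v) - ψ u * (φ v * χ w - φ w * χ v)
        + χ u * (φ v * ψ w - φ w * ψ v) := by
  rw [wedgeForm3, ι_mul_ι_mul_ι_eq_ιMulti, liftAlternating_apply_ιMulti, Pi.single_eq_same]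
  change Matrix.det (Matrix.of fun i j => ![φ, ψ, χ] j (![u, v, w] i)) = _
  rw [Matrix.det_fin_three]
  simp only [Matrix.of_apply, Matrix.cons_val_zero, Matrix.cons_val_one, Matrix.cons_val]
  ring

def wedgeCubeOfKer (φ : Module.Dual R M) : Submodule R (ExteriorAlgebra R M) :=
  Submodule.span R {z | ∃ u v w, φ u = 0 ∧ φ v = 0 ∧ φ w = 0 ∧ z = ι R u * ι R v * ι R w}

theorem wedgeForm3_eq_zero_of_mem_wedgeCubeOfKer {φ : Module.Dual R M} (ψ χ : Module.Dual R M)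
    {z : ExteriorAlgebra R M} (hz : z ∈ wedgeCubeOfKer φ) : wedgeForm3 φ ψ χ z = 0 := by
  refine (Submodule.span_le (p := LinearMap.ker (wedgeForm3 φ ψ χ))).mpr ?_ hz
  rintro _ ⟨u, v, w, hu, hv, hw, rfl⟩
  simp [wedgeForm3_ι_mul_ι_mul_ι, hu, hv, hw]

noncomputable def symplecticOmega {g : ℕ} (e : Module.Basis (Fin g ⊕ Fin g) R M) :
    ExteriorAlgebra R M :=
  ∑ i, ι R (e (.inl i)) * ι R (e (.inr i))

theorem ι_mul_symplecticOmega_eq_zero (e : Module.Basis (Fin 1 ⊕ Fin 1) R M) (h : M) :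
    ι R h * symplecticOmega e = 0 := by
  have hsum := e.sum_repr h
  rw [Fintype.sum_sum_type, Fin.sum_univ_one, Fin.sum_univ_one] at hsum
  have hmem : h ∈ Submodule.span R {e (.inl 0), e (.inr 0)} :=
    Submodule.mem_span_pair.mpr ⟨_, _, hsum⟩
  rw [symplecticOmega, Fin.sum_univ_one, ← mul_assoc]
  exact ι_mul_ι_mul_ι_eq_zero_of_mem_span_pair hmem

end ExteriorAlgebra

structure IsSymplecticBasis {R M : Type*} [CommRing R] [AddCommGroup M] [Module R M] {g : ℕ}
    (B : M →ₗ[R] M →ₗ[R] R) (e : Module.Basis (Fin g ⊕ Fin g) R M) : Prop where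
  inl_inr : ∀ i j, B (e (.inl i)) (e (.inr j)) = if i = j then 1 else 0
  inl_inl : ∀ i j, B (e (.inl i)) (e (.inl j)) = 0
  inr_inr : ∀ i j, B (e (.inr i)) (e (.inr j)) = 0

namespace IsSymplecticBasis

variable {R M : Type*} [CommRing R] [AddCommGroup M] [Module R M] {g : ℕ}
  {B : M →ₗ[R] M →ₗ[R] R} {e : Module.Basis (Fin g ⊕ Fin g) R M}

theorem repr_inl (he : IsSymplecticBasis B e) (h : M) (j : Fin g) :
    e.repr h (.inl j) = B h (e (.inr j)) := by
  have : e.coord (.inl j) = B.flip (e (.inr j)) := by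
    refine e.ext fun i => ?_
    rcases i with i | i <;> simp [Finsupp.single_apply, he.inl_inr, he.inr_inr]
  exact LinearMap.congr_fun this h

theorem repr_inr (he : IsSymplecticBasis B e) (hB : B.IsAlt) (h : M) (j : Fin g) :
    e.repr h (.inr j) = -B h (e (.inl j)) := by
  have : e.coord (.inr j) = -B.flip (e (.inl j)) := by
    refine e.ext fun i => ?_
    rcases i with i | i
    · simp [he.inl_inl]
    · simp [Finsupp.single_apply, ← hB.neg (e (.inl j)), he.inl_inr, eq_comm]
  exact LinearMap.congr_fun this h

theorem sum_smul_sub_sum_smul (he : IsSymplecticBasis B e) (hB : B.IsAlt) (h : M) :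
    ∑ i, B h (e (.inr i)) • e (.inl i) - ∑ i, B h (e (.inl i)) • e (.inr i) = h := by
  conv_rhs => rw [← e.sum_repr h, Fintype.sum_sum_type]
  simp only [he.repr_inl, he.repr_inr hB, neg_smul, Finset.sum_neg_distrib, sub_eq_add_neg]

theorem sum_mul_sub_mul (he : IsSymplecticBasis B e) (hB : B.IsAlt) (p q : M) :
    ∑ i, (B p (e (.inl i)) * B q (e (.inr i)) - B p (e (.inr i)) * B q (e (.inl i))) =
      B p q := by
  conv_rhs => rw [← he.sum_smul_sub_sum_smul hB q]
  simp [Finset.sum_sub_distrib, mul_comm]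

theorem flip_injective (he : IsSymplecticBasis B e) (hB : B.IsAlt) :
    Function.Injective B.flip := by
  refine (injective_iff_map_eq_zero _).mpr fun h hh => ?_
  have hh' (z : M) : B h z = 0 := by
    rw [← hB.neg, ← LinearMap.flip_apply B, hh, LinearMap.zero_apply, neg_zero]
  rw [← he.sum_smul_sub_sum_smul hB h]
  simp [hh']

theorem flip_surjective (he : IsSymplecticBasis B e) (hB : B.IsAlt) :
    Function.Surjective B.flip := by
  intro f
  refine ⟨∑ i, f (e (.inl i)) • e (.inr i) - ∑ i, f (e (.inr i)) • e (.inl i), ?_⟩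
  ext z
  conv_rhs => rw [← he.sum_smul_sub_sum_smul hB z]
  simp [mul_comm]

theorem wedgeForm3_ι_mul_symplecticOmega (he : IsSymplecticBasis B e) (hB : B.IsAlt)
    (p q r h : M) :
    wedgeForm3 (B p) (B q) (B r) (ι R h * symplecticOmega e) =
      B p h * B q r - B q h * B p r + B r h * B p q := by
  rw [symplecticOmega, Finset.mul_sum, map_sum]
  simp only [← mul_assoc, wedgeForm3_ι_mul_ι_mul_ι]
  simp only [Finset.sum_add_distrib, Finset.sum_sub_distrib, ← Finset.mul_sum,
    he.sum_mul_sub_mul hB]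

theorem eq_smul_sub_smul_of_ι_mul_symplecticOmega_mem (he : IsSymplecticBasis B e)
    (hB : B.IsAlt) {x y h : M} (hxy : B x y = 1)
    (hh : ι R h * symplecticOmega e ∈ wedgeCubeOfKer (B x)) : h = B x h • y - B y h • x := by
  refine he.flip_injective hB (LinearMap.ext fun z => ?_)
  have hz := wedgeForm3_eq_zero_of_mem_wedgeCubeOfKer (B z) (B y) hh
  rw [he.wedgeForm3_ι_mul_symplecticOmega hB, hxy, ← hB.neg z x] at hz
  change B z h = B z (B x h • y - B y h • x)
  simp only [map_sub, map_smul, smul_eq_mul]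
  linear_combination -hz

theorem sub_one_mul_eq_zero_of_ι_mul_symplecticOmega_mem (he : IsSymplecticBasis B e)
    (hB : B.IsAlt) {x h : M} (hh : ι R h * symplecticOmega e ∈ wedgeCubeOfKer (B x)) :
    ((g : R) - 1) * B x h = 0 := by
  calc ((g : R) - 1) * B x h
      = ∑ i, (B x h -
          (B x (e (.inl i)) * B h (e (.inr i)) - B x (e (.inr i)) * B h (e (.inl i)))) := by
        rw [Finset.sum_sub_distrib, he.sum_mul_sub_mul hB]
        simp only [Finset.sum_const, Finset.card_univ, Fintype.card_fin, nsmul_eq_mul]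
        ring
    _ = ∑ i, wedgeForm3 (B x) (B (e (.inl i))) (B (e (.inr i))) (ι R h * symplecticOmega e) := by
        refine Finset.sum_congr rfl fun i _ => ?_
        rw [he.wedgeForm3_ι_mul_symplecticOmega hB, he.inl_inr, if_pos rfl,
          ← hB.neg h (e (.inl i)), ← hB.neg h (e (.inr i))]
        ring
    _ = 0 := Finset.sum_eq_zero fun i _ => wedgeForm3_eq_zero_of_mem_wedgeCubeOfKer _ _ hh

theorem ι_mul_symplecticOmega_mem (he : IsSymplecticBasis B e) (hB : B.IsAlt) {x y : M}
    (hxy : B x y = 1) : ι R x * symplecticOmega e ∈ wedgeCubeOfKer (B x) := by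
  have hperp (z : M) : B x (z - B x z • y) = 0 := by simp [hxy]
  have hsum : ∑ i, ι R x * ι R (e (.inl i) - B x (e (.inl i)) • y) *
      ι R (e (.inr i) - B x (e (.inr i)) • y) = ι R x * symplecticOmega e := by
    simp only [ι_mul_ι_sub_smul_mul_ι_sub_smul]
    rw [Finset.sum_add_distrib, ← Finset.mul_sum, ← map_sum, Finset.sum_sub_distrib,
      he.sum_smul_sub_sum_smul hB, ι_mul_ι_mul_ι_self, add_zero, symplecticOmega, Finset.mul_sum]
    simp only [mul_assoc]
  rw [← hsum]
  exact Submodule.sum_mem _ fun i _ =>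
    Submodule.subset_span ⟨x, _, _, hB x, hperp _, hperp _, rfl⟩

end IsSymplecticBasis

theorem johnson_linear_algebra_primitive_general (g : ℕ)
    (H : Type) [AddCommGroup H] [Module ℤ H]
    (e : Module.Basis (Fin g ⊕ Fin g) ℤ H)
    (B : H →ₗ[ℤ] H →ₗ[ℤ] ℤ)
    (hBab : ∀ i j : Fin g, B (e (Sum.inl i)) (e (Sum.inr j)) = if i = j then 1 else 0)
    (hBaa : ∀ i j : Fin g, B (e (Sum.inl i)) (e (Sum.inl j)) = 0)
    (hBbb : ∀ i j : Fin g, B (e (Sum.inr i)) (e (Sum.inr j)) = 0)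
    (hBalt : ∀ u : H, B u u = 0)
    (x : H) (hx : ∃ f : H →ₗ[ℤ] ℤ, f x = 1)
    (ω : ExteriorAlgebra ℤ H)
    (hω : ω = ∑ i : Fin g, ι ℤ (e (Sum.inl i)) * ι ℤ (e (Sum.inr i)))
    (iH : H →ₗ[ℤ] ExteriorAlgebra ℤ H)
    (hiH : ∀ h : H, iH h = ι ℤ h * ω) :
    (Submodule.span ℤ {z : ExteriorAlgebra ℤ H |
        ∃ u v w : H, B x u = 0 ∧ B x v = 0 ∧ B x w = 0 ∧
          z = ι ℤ u * ι ℤ v * ι ℤ w}) ⊓ LinearMap.range iH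
      = Submodule.span ℤ {iH x} := by
  have he : IsSymplecticBasis B e := ⟨hBab, hBaa, hBbb⟩
  obtain ⟨f, hf⟩ := hx
  obtain ⟨y, hy⟩ := he.flip_surjective hBalt f
  have hxy : B x y = 1 := by rw [← hf, ← hy, LinearMap.flip_apply]
  replace hiH (h : H) : iH h = ι ℤ h * symplecticOmega e := by rw [hiH, hω, symplecticOmega]
  refine le_antisymm ?_ <| (Submodule.span_singleton_le_iff_mem _ _).mpr
    ⟨by rw [hiH]; exact he.ι_mul_symplecticOmega_mem hBalt hxy, x, rfl⟩
  rintro _ ⟨hmem, h, rfl⟩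
  replace hmem : ι ℤ h * symplecticOmega e ∈ wedgeCubeOfKer (B x) := by rw [← hiH]; exact hmem
  rcases mul_eq_zero.mp (he.sub_one_mul_eq_zero_of_ι_mul_symplecticOmega_mem hBalt hmem)
    with hg | hxh
  · obtain rfl : g = 1 := by omega
    rw [hiH h, ι_mul_symplecticOmega_eq_zero]
    exact Submodule.zero_mem _
  · have hh := he.eq_smul_sub_smul_of_ι_mul_symplecticOmega_mem hBalt hxy hmem
    refine Submodule.mem_span_singleton.mpr ⟨-B y h, ?_⟩
    conv_rhs => rw [hh]
    rw [map_sub, iH.map_smul, iH.map_smul, hxh, zero_smul, zero_sub, neg_smul]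

/-- For a symplectic `ℤ`-module `H` of rank `2g` with symplectic basis
`e`, canonical element `ω` and standard embedding `iH : h ↦ h ∧ ω`, and a primitive
vector `x`, the intersection of `∧³(x^⊥)` with `iH(H)` inside `∧³H` is the cyclic
subgroup generated by `iH x`. -/
theorem johnson_linear_algebra_primitive (g : ℕ) (hg : 1 ≤ g)
    (H : Type) [AddCommGroup H] [Module ℤ H]
    (e : Module.Basis (Fin g ⊕ Fin g) ℤ H)
    (B : H →ₗ[ℤ] H →ₗ[ℤ] ℤ)
    (hBab : ∀ i j : Fin g, B (e (Sum.inl i)) (e (Sum.inr j)) = if i = j then 1 else 0)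
    (hBaa : ∀ i j : Fin g, B (e (Sum.inl i)) (e (Sum.inl j)) = 0)
    (hBbb : ∀ i j : Fin g, B (e (Sum.inr i)) (e (Sum.inr j)) = 0)
    (hBalt : ∀ u : H, B u u = 0)
    (x : H) (hx : ∃ f : H →ₗ[ℤ] ℤ, f x = 1)
    (ω : ExteriorAlgebra ℤ H)
    (hω : ω = ∑ i : Fin g, ι ℤ (e (Sum.inl i)) * ι ℤ (e (Sum.inr i)))
    (iH : H →ₗ[ℤ] ExteriorAlgebra ℤ H)
    (hiH : ∀ h : H, iH h = ι ℤ h * ω) :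
    (Submodule.span ℤ {z : ExteriorAlgebra ℤ H |
        ∃ u v w : H, B x u = 0 ∧ B x v = 0 ∧ B x w = 0 ∧
          z = ι ℤ u * ι ℤ v * ι ℤ w}) ⊓ LinearMap.range iH
      = Submodule.span ℤ {iH x} :=
  johnson_linear_algebra_primitive_general g H e B hBab hBaa hBbb hBalt x hx ω hω iH hiH
end

section
/- Let H be a symplectic Z-module of rank 2g with canonical element ω and standard embedding i : H → ∧³H, i(h) = h∧ω. If x and y are primitive vectors in H spanning a rank-2 direct summand of H with algebraic intersection number ⟨x,y⟩ equal to 0 or 1, then ∧³(⟨x,y⟩^⊥) ∩ i(H) = 0 inside ∧³H. -/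
/-!
Contracting with `⟨x, -⟩` kills `∧³(⟨x,y⟩^⊥)`, while contracting `ω` with `⟨u, -⟩` returns `-u`,
so on `h ∧ ω` it gives `⟨x,h⟩ ω + h ∧ x`. Hence if `h ∧ ω ∈ ∧³(⟨x,y⟩^⊥)`, then
`⟨x,h⟩ ω + h ∧ x = 0 = ⟨y,h⟩ ω + h ∧ y`, and contracting the first identity with `⟨y, -⟩`
gives `⟨y,x⟩ h = ⟨y,h⟩ x - ⟨x,h⟩ y`.
If `⟨x,y⟩ = 0`, independence forces `⟨x,h⟩ = ⟨y,h⟩ = 0`, so `h ∧ x = h ∧ y = 0`, and since `x`, `y`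
are primitive `h ∈ ℤx ∩ ℤy = 0`. If `⟨x,y⟩ = 1`, then `h = ⟨x,h⟩ y - ⟨y,h⟩ x`, and
`h ∧ ω = y ∧ (⟨x,h⟩ ω) - x ∧ (⟨y,h⟩ ω) = x ∧ h ∧ y - y ∧ h ∧ x = 0`.
-/

open ExteriorAlgebra CliffordAlgebra

section Contraction

variable {R M : Type*} [CommRing R] [AddCommGroup M] [Module R M]

theorem span_le_ker_contractLeft (d : Module.Dual R M) (s : Set (ExteriorAlgebra R M))
    (hs : ∀ z ∈ s, ∃ u v w, d u = 0 ∧ d v = 0 ∧ d w = 0 ∧ z = ι R u * ι R v * ι R w) :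
    Submodule.span R s ≤ LinearMap.ker (contractLeft d) := by
  rw [Submodule.span_le]
  rintro _ hz
  obtain ⟨u, v, w, hu, hv, hw, rfl⟩ := hs _ hz
  simp [mul_assoc, contractLeft_ι_mul, contractLeft_ι, hu, hv, hw]

theorem eq_smul_of_ι_mul_ι_eq_zero {f : Module.Dual R M} {x h : M} (hfx : f x = 1)
    (hhx : ι R h * ι R x = 0) : h = f h • x := by
  have := congrArg (contractLeft f) hhx
  rw [contractLeft_ι_mul, contractLeft_ι, hfx, map_one, mul_one, map_zero, sub_eq_zero,
    ← map_smul] at this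
  exact (ι_inj R _ _).mp this.symm

theorem ι_mul_ι_mul_ι_eq_zero_of_mem_span {u v w : M} (hv : v ∈ Submodule.span R {u, w}) :
    ι R u * ι R v * ι R w = 0 := by
  obtain ⟨a, b, rfl⟩ := Submodule.mem_span_pair.mp hv
  simp only [map_add, map_smul, mul_add, add_mul, mul_smul_comm, smul_mul_assoc, ι_sq_zero,
    mul_assoc, zero_mul, mul_zero, smul_zero, add_zero]

theorem ι_mul_eq_zero_of_eq_smul_sub_smul {x y h : M} {a b : R} {ω : ExteriorAlgebra R M}
    (hh : h = a • y - b • x) (hx : a • ω + ι R h * ι R x = 0) (hy : b • ω + ι R h * ι R y = 0) :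
    ι R h * ω = 0 := by
  have hyx : ι R y * ι R h * ι R x = 0 :=
    ι_mul_ι_mul_ι_eq_zero_of_mem_span (hh ▸ Submodule.mem_span_pair.mpr ⟨a, -b, by module⟩)
  have hxy : ι R x * ι R h * ι R y = 0 :=
    ι_mul_ι_mul_ι_eq_zero_of_mem_span (hh ▸ Submodule.mem_span_pair.mpr ⟨-b, a, by module⟩)
  calc ι R h * ω = ι R y * (a • ω) - ι R x * (b • ω) := by
        rw [hh, map_sub, map_smul, map_smul, sub_mul, mul_smul_comm, mul_smul_comm,
          smul_mul_assoc, smul_mul_assoc]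
    _ = ι R x * ι R h * ι R y - ι R y * ι R h * ι R x := by
        rw [eq_neg_of_add_eq_zero_left hx, eq_neg_of_add_eq_zero_left hy]
        simp only [mul_neg, mul_assoc]; abel
    _ = 0 := by rw [hxy, hyx, sub_zero]

theorem eq_zero_of_ι_mul_ι_eq_zero {x y h : M} (hli : LinearIndependent R ![x, y])
    (hx : ∃ f : Module.Dual R M, f x = 1) (hy : ∃ f : Module.Dual R M, f y = 1)
    (hhx : ι R h * ι R x = 0) (hhy : ι R h * ι R y = 0) : h = 0 := by
  obtain ⟨f, hfx⟩ := hx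
  obtain ⟨f', hfy⟩ := hy
  have hhx' := eq_smul_of_ι_mul_ι_eq_zero hfx hhx
  have hhy' := eq_smul_of_ι_mul_ι_eq_zero hfy hhy
  obtain ⟨hfh, -⟩ := LinearIndependent.pair_iff.mp hli (f h) (-f' h)
    (by linear_combination (norm := module) hhy' - hhx')
  rw [hhx', hfh, zero_smul]

end Contraction

section Symplectic

variable {R M κ : Type*} [CommRing R] [AddCommGroup M] [Module R M] [DecidableEq κ]

structure IsSymplecticBasis_s1 (B : M →ₗ[R] M →ₗ[R] R) (e : Module.Basis (κ ⊕ κ) R M) : Prop where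
  inl_inr : ∀ i j, B (e (.inl i)) (e (.inr j)) = if i = j then 1 else 0
  inl_inl : ∀ i j, B (e (.inl i)) (e (.inl j)) = 0
  inr_inr : ∀ i j, B (e (.inr i)) (e (.inr j)) = 0

noncomputable def canonicalTwoVector [Fintype κ] (e : Module.Basis (κ ⊕ κ) R M) :
    ExteriorAlgebra R M :=
  ∑ i, ι R (e (.inl i)) * ι R (e (.inr i))

namespace IsSymplecticBasis_s1

variable {B : M →ₗ[R] M →ₗ[R] R} {e : Module.Basis (κ ⊕ κ) R M}

theorem flip_inr (he : IsSymplecticBasis_s1 B e) (i : κ) : B.flip (e (.inr i)) = e.coord (.inl i) :=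
  e.ext fun
    | .inl j => by simp [he.inl_inr, Finsupp.single_apply, eq_comm]
    | .inr j => by simp [he.inr_inr]

theorem flip_inl (he : IsSymplecticBasis_s1 B e) (hB : B.IsAlt) (i : κ) :
    B.flip (e (.inl i)) = -e.coord (.inr i) :=
  e.ext fun
    | .inl j => by simp [he.inl_inl]
    | .inr j => by
      rw [LinearMap.flip_apply, ← hB.neg, he.inl_inr]
      simp [Finsupp.single_apply, eq_comm]

theorem contractLeft_canonicalTwoVector [Fintype κ] (he : IsSymplecticBasis_s1 B e) (hB : B.IsAlt)
    (u : M) : contractLeft (B u) (canonicalTwoVector e) = -ι R u := by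
  have hinr (i : κ) : B u (e (.inr i)) = e.repr u (.inl i) :=
    LinearMap.congr_fun (he.flip_inr i) u
  have hinl (i : κ) : B u (e (.inl i)) = -e.repr u (.inr i) :=
    LinearMap.congr_fun (he.flip_inl hB i) u
  simp only [canonicalTwoVector, map_sum, contractLeft_ι_mul, contractLeft_ι, hinr, hinl,
    Algebra.algebraMap_eq_smul_one, mul_smul_comm, mul_one]
  conv_rhs => rw [← e.sum_repr u, map_sum, Fintype.sum_sum_type]
  simp only [map_smul, neg_smul, Finset.sum_sub_distrib, Finset.sum_neg_distrib, neg_add]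
  abel

theorem contractLeft_ι_mul_canonicalTwoVector [Fintype κ] (he : IsSymplecticBasis_s1 B e)
    (hB : B.IsAlt) (u h : M) :
    contractLeft (B u) (ι R h * canonicalTwoVector e) =
      B u h • canonicalTwoVector e + ι R h * ι R u := by
  rw [contractLeft_ι_mul, he.contractLeft_canonicalTwoVector hB, mul_neg, sub_neg_eq_add]

theorem smul_eq_of_smul_canonicalTwoVector_add_eq_zero [Fintype κ] (he : IsSymplecticBasis_s1 B e)
    (hB : B.IsAlt) {x h : M} (hx : B x h • canonicalTwoVector e + ι R h * ι R x = 0) (y : M) :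
    B y x • h = B y h • x - B x h • y := by
  have := congrArg (contractLeft (B y)) hx
  rw [map_add, map_smul, he.contractLeft_canonicalTwoVector hB, contractLeft_ι_mul,
    contractLeft_ι, ← Algebra.commutes, ← Algebra.smul_def, map_zero] at this
  rw [← sub_eq_zero, ← ι_eq_zero_iff (R := R), map_sub, map_sub, map_smul, map_smul, map_smul]
  linear_combination (norm := module) -this

theorem ι_mul_canonicalTwoVector_eq_zero [Fintype κ] (he : IsSymplecticBasis_s1 B e)
    (hB : B.IsAlt) {x y h : M} (hli : LinearIndependent R ![x, y])
    (hx : ∃ f : Module.Dual R M, f x = 1) (hy : ∃ f : Module.Dual R M, f y = 1)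
    (hxy : B x y = 0 ∨ B x y = 1)
    (hzx : contractLeft (B x) (ι R h * canonicalTwoVector e) = 0)
    (hzy : contractLeft (B y) (ι R h * canonicalTwoVector e) = 0) :
    ι R h * canonicalTwoVector e = 0 := by
  rw [he.contractLeft_ι_mul_canonicalTwoVector hB] at hzx hzy
  have hcomb := he.smul_eq_of_smul_canonicalTwoVector_add_eq_zero hB hzx y
  rw [← hB.neg] at hcomb
  rcases hxy with hxy | hxy
  · rw [hxy, neg_zero, zero_smul] at hcomb
    obtain ⟨hyh, hxh⟩ := LinearIndependent.pair_iff.mp hli _ (-B x h)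
      (by linear_combination (norm := module) -hcomb)
    rw [neg_eq_zero] at hxh
    rw [hxh, zero_smul, zero_add] at hzx
    rw [hyh, zero_smul, zero_add] at hzy
    rw [eq_zero_of_ι_mul_ι_eq_zero hli hx hy hzx hzy, map_zero, zero_mul]
  · rw [hxy] at hcomb
    exact ι_mul_eq_zero_of_eq_smul_sub_smul (by linear_combination (norm := module) -hcomb)
      hzx hzy

end IsSymplecticBasis_s1

end Symplectic

theorem johnson_linear_algebra_two_primitive_general (g : ℕ)
    (H : Type) [AddCommGroup H] [Module ℤ H]
    (e : Module.Basis (Fin g ⊕ Fin g) ℤ H)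
    (B : H →ₗ[ℤ] H →ₗ[ℤ] ℤ)
    (hBab : ∀ i j : Fin g, B (e (Sum.inl i)) (e (Sum.inr j)) = if i = j then 1 else 0)
    (hBaa : ∀ i j : Fin g, B (e (Sum.inl i)) (e (Sum.inl j)) = 0)
    (hBbb : ∀ i j : Fin g, B (e (Sum.inr i)) (e (Sum.inr j)) = 0)
    (hBalt : ∀ u : H, B u u = 0)
    (x y : H)
    (hx : ∃ f : H →ₗ[ℤ] ℤ, f x = 1) (hy : ∃ f : H →ₗ[ℤ] ℤ, f y = 1)
    (hxy : B x y = 0 ∨ B x y = 1)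
    (hli : LinearIndependent ℤ ![x, y])
    (ω : ExteriorAlgebra ℤ H)
    (hω : ω = ∑ i : Fin g, ι ℤ (e (Sum.inl i)) * ι ℤ (e (Sum.inr i)))
    (iH : H →ₗ[ℤ] ExteriorAlgebra ℤ H)
    (hiH : ∀ h : H, iH h = ι ℤ h * ω) :
    (Submodule.span ℤ {z : ExteriorAlgebra ℤ H |
        ∃ u v w : H,
          B x u = 0 ∧ B y u = 0 ∧ B x v = 0 ∧ B y v = 0 ∧ B x w = 0 ∧ B y w = 0 ∧
          z = ι ℤ u * ι ℤ v * ι ℤ w}) ⊓ LinearMap.range iH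
      = ⊥ := by
  have he : IsSymplecticBasis_s1 B e := ⟨hBab, hBaa, hBbb⟩
  have hB : B.IsAlt := hBalt
  replace hω : ω = canonicalTwoVector e := hω
  subst hω
  rw [eq_bot_iff]
  rintro _ ⟨hz, h, rfl⟩
  rw [hiH] at hz
  rw [Submodule.mem_bot, hiH]
  exact he.ι_mul_canonicalTwoVector_eq_zero hB hli hx hy hxy
    (span_le_ker_contractLeft (B x) _ (by
      rintro _ ⟨u, v, w, hu, -, hv, -, hw, -, rfl⟩; exact ⟨u, v, w, hu, hv, hw, rfl⟩) hz)
    (span_le_ker_contractLeft (B y) _ (by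
      rintro _ ⟨u, v, w, -, hu, -, hv, -, hw, rfl⟩; exact ⟨u, v, w, hu, hv, hw, rfl⟩) hz)

/-- For a symplectic `ℤ`-module `H` of rank `2g` and primitive vectors
`x, y` spanning a rank-2 direct summand with `⟨x,y⟩ ∈ {0,1}`, the intersection of
`∧³(⟨x,y⟩^⊥)` with the image of the standard embedding `iH : h ↦ h ∧ ω` is zero. -/
theorem johnson_linear_algebra_two_primitive (g : ℕ) (hg : 1 ≤ g)
    (H : Type) [AddCommGroup H] [Module ℤ H]
    (e : Module.Basis (Fin g ⊕ Fin g) ℤ H)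
    (B : H →ₗ[ℤ] H →ₗ[ℤ] ℤ)
    (hBab : ∀ i j : Fin g, B (e (Sum.inl i)) (e (Sum.inr j)) = if i = j then 1 else 0)
    (hBaa : ∀ i j : Fin g, B (e (Sum.inl i)) (e (Sum.inl j)) = 0)
    (hBbb : ∀ i j : Fin g, B (e (Sum.inr i)) (e (Sum.inr j)) = 0)
    (hBalt : ∀ u : H, B u u = 0)
    (x y : H)
    (hx : ∃ f : H →ₗ[ℤ] ℤ, f x = 1) (hy : ∃ f : H →ₗ[ℤ] ℤ, f y = 1)
    (hxy : B x y = 0 ∨ B x y = 1)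
    (hli : LinearIndependent ℤ ![x, y])
    (hsummand : ∃ q : Submodule ℤ H, IsCompl (Submodule.span ℤ {x, y}) q)
    (ω : ExteriorAlgebra ℤ H)
    (hω : ω = ∑ i : Fin g, ι ℤ (e (Sum.inl i)) * ι ℤ (e (Sum.inr i)))
    (iH : H →ₗ[ℤ] ExteriorAlgebra ℤ H)
    (hiH : ∀ h : H, iH h = ι ℤ h * ω) :
    (Submodule.span ℤ {z : ExteriorAlgebra ℤ H |
        ∃ u v w : H,
          B x u = 0 ∧ B y u = 0 ∧ B x v = 0 ∧ B y v = 0 ∧ B x w = 0 ∧ B y w = 0 ∧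
          z = ι ℤ u * ι ℤ v * ι ℤ w}) ⊓ LinearMap.range iH
      = ⊥ :=
  johnson_linear_algebra_two_primitive_general g H e B hBab hBaa hBbb hBalt x y hx hy hxy hli ω hω
    iH hiH
end

section
/- Let 1 → K → Γ → G → 1 be a split short exact sequence of groups with splitting s : G → Γ, let Q be a group, and let f : Γ → Q be a homomorphism. Regard G as a subgroup of Γ via s. If f(K) ∩ f(G) = {1}, then there is a short exact sequence 1 → Ker(f|_K) → Ker(f) → Ker(f|_G) → 1; that is, the restriction of the projection Γ → G to Ker(f) has image exactly Ker(f|_G) (under the identification via s) and kernel Ker(f|_K). -/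
/-- Let `1 → K → Γ → G → 1` be a split exact sequence with splitting
`s : G → Γ` and let `f : Γ → Q` be a homomorphism with `f(K) ∩ f(s(G)) = {1}`.
Then the projection `π` maps `Ker f` onto `Ker (f ∘ s)` (and the kernel of this
restriction is `Ker f ∩ K`), giving the short exact sequence
`1 → Ker(f|_K) → Ker f → Ker(f|_G) → 1`. -/
theorem kernel_exact_sequence {Γ G Q : Type} [Group Γ] [Group G] [Group Q]
    (π : Γ →* G) (hπ : Function.Surjective π)
    (s : G →* Γ) (hs : ∀ x : G, π (s x) = x)
    (f : Γ →* Q)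
    (hdisj : ∀ k : Γ, k ∈ π.ker → ∀ x : G, f k = f (s x) → f k = 1) :
    (f.ker.map π = (f.comp s).ker) ∧
    (∀ y : Γ, (y ∈ f.ker ∧ y ∈ π.ker) ↔ (y ∈ f.ker ⊓ π.ker)) := by
  constructor
  · ext g
    simp only [Subgroup.mem_map, MonoidHom.mem_ker, MonoidHom.comp_apply]
    constructor
    · rintro ⟨x, hx, rfl⟩
      have hk : x * (s (π x))⁻¹ ∈ π.ker := by
        simp [MonoidHom.mem_ker, hs]
      have h1 : f (x * (s (π x))⁻¹) = f (s (π x)⁻¹) := by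
        simp [hx, map_inv]
      have hz := hdisj _ hk ((π x)⁻¹) (by simpa using h1)
      rw [map_mul, hx, one_mul, map_inv, inv_eq_one] at hz
      exact hz
    · intro hg
      exact ⟨s g, hg, hs g⟩
  · intro y
    simp [Subgroup.mem_inf]
end

section
/- Let G be a group, G' ≤ G a finite index subgroup, and g ∈ G a central element with g ∈ G'. If the class of g in H_1(G;Q) = G^{ab} ⊗ Q is zero, then the class of g in H_1(G';Q) = (G')^{ab} ⊗ Q is zero. -/
open scoped TensorProduct

/-- `ℚ ⊗[ℤ] M` is the localization of `M` away from the nonzero integers. -/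
theorem one_tmul_rat_eq_zero_iff_isOfFinAddOrder {M : Type*} [AddCommGroup M] {x : M} :
    (1 : ℚ) ⊗ₜ[ℤ] x = 0 ↔ IsOfFinAddOrder x := by
  rw [← TensorProduct.mk_apply, IsLocalizedModule.eq_zero_iff (nonZeroDivisors ℤ),
    isOfFinAddOrder_iff_zsmul_eq_zero]
  constructor
  · rintro ⟨⟨n, hn⟩, h⟩
    exact ⟨n, nonZeroDivisors.ne_zero hn, h⟩
  · rintro ⟨n, hn, h⟩
    exact ⟨⟨n, mem_nonZeroDivisors_of_ne_zero hn⟩, h⟩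

namespace MonoidHom

variable {G A : Type*} [Group G] [CommGroup A] {H : Subgroup G} [H.FiniteIndex]

theorem transfer_eq_pow_index_of_mem_center (ϕ : H →* A) {g : G}
    (hcent : g ∈ Subgroup.center G) (hg : g ∈ H) : transfer ϕ g = ϕ ⟨g, hg⟩ ^ H.index := by
  have hconj (k : ℕ) (g₀ : G) : g₀⁻¹ * g ^ k * g₀ = g ^ k := by
    rw [Subgroup.mem_center_iff.mp (Subgroup.pow_mem _ hcent k) g₀⁻¹, inv_mul_cancel_right]
  rw [transfer_eq_pow ϕ g fun k g₀ _ => hconj k g₀, ← map_pow]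
  rfl

end MonoidHom

/-- The transfer `Gᵃᵇ → Hᵃᵇ` maps the class of a central `g ∈ H` to `[g]_H ^ [G : H]`. -/
theorem Abelianization.isOfFinOrder_of_subgroup_of_mem_center {G : Type*} [Group G]
    {H : Subgroup G} [H.FiniteIndex] {g : G} (hcent : g ∈ Subgroup.center G) (hg : g ∈ H)
    (h : IsOfFinOrder (of g)) : IsOfFinOrder (of (⟨g, hg⟩ : H)) := by
  have hpow : IsOfFinOrder (of (⟨g, hg⟩ : H) ^ H.index) := by
    simpa only [lift_apply_of, (of : H →* _).transfer_eq_pow_index_of_mem_center hcent hg]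
      using (lift ((of : H →* _).transfer)).isOfFinOrder h
  exact hpow.of_pow Subgroup.FiniteIndex.index_ne_zero

/-- If `G' ≤ G` has finite index, `g ∈ G'` is central in `G`, and the
class of `g` in `H₁(G;ℚ) = G^{ab} ⊗ ℚ` vanishes, then the class of `g` in
`H₁(G';ℚ) = (G')^{ab} ⊗ ℚ` vanishes. -/
theorem central_element_vanishes_in_finite_index {G : Type} [Group G]
    (G' : Subgroup G) [G'.FiniteIndex]
    (g : G) (hcent : g ∈ Subgroup.center G) (hg' : g ∈ G')
    (hvanish : ((1 : ℚ) ⊗ₜ[ℤ] Additive.ofMul (Abelianization.of g)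
        : ℚ ⊗[ℤ] Additive (Abelianization G)) = 0) :
    ((1 : ℚ) ⊗ₜ[ℤ] Additive.ofMul (Abelianization.of (⟨g, hg'⟩ : G'))
        : ℚ ⊗[ℤ] Additive (Abelianization G')) = 0 := by
  rw [one_tmul_rat_eq_zero_iff_isOfFinAddOrder, isOfFinAddOrder_ofMul_iff] at hvanish ⊢
  exact Abelianization.isOfFinOrder_of_subgroup_of_mem_center hcent hg' hvanish
end

section
/- Let A and B be free abelian groups, and let Q be the image of a homomorphism φ : A → B with kernel K. Then the kernel of the induced map ∧²A → ∧²B equals the subgroup A ∧ K (generated by elements a ∧ k with a ∈ A, k ∈ K), provided Q is a direct summand of B (equivalently, B/Q is torsion-free). -/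
open ExteriorAlgebra

/-!
The range of `φ` is a direct summand of the projective module `B`, hence projective, so `φ` has a
generalized inverse `g : B → A` with `φ ∘ g ∘ φ = φ`. Then `ψ = g ∘ φ` satisfies `φ ∘ ψ = φ`, so
`a - ψ a ∈ K` for all `a`, and expanding `ψ a ∧ ψ a'` shows `z - ∧²ψ z ∈ A ∧ K` for every
`z ∈ ∧²A`. If `∧²φ z = 0` then `∧²ψ z = ∧²g (∧²φ z) = 0`, hence `z ∈ A ∧ K`.
-/

variable {R M N : Type*} [CommRing R] [AddCommGroup M] [Module R M] [AddCommGroup N] [Module R N]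

namespace ExteriorAlgebra

variable (R M) in
def wedgeProducts : Submodule R (ExteriorAlgebra R M) :=
  Submodule.span R {z | ∃ a a' : M, z = ι R a * ι R a'}

def wedgeKer (φ : M →ₗ[R] N) : Submodule R (ExteriorAlgebra R M) :=
  Submodule.span R {z | ∃ a k : M, k ∈ LinearMap.ker φ ∧ z = ι R a * ι R k}

variable {φ : M →ₗ[R] N}

theorem ι_mul_ι_mem_wedgeKer (a : M) {k : M} (hk : k ∈ LinearMap.ker φ) :
    ι R a * ι R k ∈ wedgeKer φ :=
  Submodule.subset_span ⟨a, k, hk, rfl⟩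

theorem ι_mul_ι_mem_wedgeKer_of_mem_ker_left {k : M} (hk : k ∈ LinearMap.ker φ) (a : M) :
    ι R k * ι R a ∈ wedgeKer φ := by
  rw [eq_neg_of_add_eq_zero_left (ι_add_mul_swap k a)]
  exact neg_mem (ι_mul_ι_mem_wedgeKer a hk)

theorem wedgeKer_le_wedgeProducts : wedgeKer φ ≤ wedgeProducts R M :=
  Submodule.span_mono fun _ ⟨a, k, _, hz⟩ ↦ ⟨a, k, hz⟩

theorem wedgeKer_le_ker_map : wedgeKer φ ≤ LinearMap.ker (map φ).toLinearMap := by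
  rw [wedgeKer, Submodule.span_le]
  rintro _ ⟨a, k, hk, rfl⟩
  simp [LinearMap.mem_ker.mp hk]

theorem sub_map_mem_wedgeKer {ψ : M →ₗ[R] M} (hψ : φ ∘ₗ ψ = φ) {z : ExteriorAlgebra R M}
    (hz : z ∈ wedgeProducts R M) : z - map ψ z ∈ wedgeKer φ := by
  have hker : ∀ a, a - ψ a ∈ LinearMap.ker φ := fun a ↦ by
    simp [← LinearMap.comp_apply, hψ]
  induction hz using Submodule.span_induction with
  | mem _ h =>
    obtain ⟨a, a', rfl⟩ := h
    have expand : ι R a * ι R a' - map ψ (ι R a * ι R a')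
        = ι R (ψ a) * ι R (a' - ψ a') + ι R (a - ψ a) * ι R a' := by
      simp only [map_mul, map_apply_ι, map_sub]
      noncomm_ring
    rw [expand]
    exact add_mem (ι_mul_ι_mem_wedgeKer _ (hker a'))
      (ι_mul_ι_mem_wedgeKer_of_mem_ker_left (hker a) a')
  | zero => simp
  | add x y _ _ hx hy =>
    rw [map_add, add_sub_add_comm]
    exact add_mem hx hy
  | smul r x _ hx =>
    rw [map_smul, ← smul_sub]
    exact Submodule.smul_mem _ r hx

theorem wedgeProducts_inf_ker_map_eq_wedgeKer {g : N →ₗ[R] M} (hg : φ ∘ₗ g ∘ₗ φ = φ) :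
    wedgeProducts R M ⊓ LinearMap.ker (map φ).toLinearMap = wedgeKer φ := by
  refine le_antisymm ?_ (le_inf wedgeKer_le_wedgeProducts wedgeKer_le_ker_map)
  rintro z ⟨hz, hφz⟩
  have hψz : map (g ∘ₗ φ) z = 0 := by
    rw [← map_comp_map]
    exact congrArg (map g) hφz |>.trans (map_zero _)
  simpa [hψz] using sub_map_mem_wedgeKer hg hz

end ExteriorAlgebra

theorem LinearMap.exists_comp_comp_eq_self_of_isCompl_range [Module.Projective R N]
    (φ : M →ₗ[R] N) {q : Submodule R N} (hq : IsCompl (LinearMap.range φ) q) :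
    ∃ g : N →ₗ[R] M, φ ∘ₗ g ∘ₗ φ = φ := by
  have : Module.Projective R (LinearMap.range φ) :=
    .of_split (LinearMap.range φ).subtype _ (Submodule.projectionOnto_comp_subtype hq)
  obtain ⟨s, hs⟩ := Module.projective_lifting_property φ.rangeRestrict LinearMap.id
    φ.surjective_rangeRestrict
  refine ⟨s ∘ₗ (LinearMap.range φ).projectionOnto q hq, ?_⟩
  ext a
  have hproj : (LinearMap.range φ).projectionOnto q hq (φ a) = φ.rangeRestrict a :=
    Submodule.projectionOnto_apply_left hq (φ.rangeRestrict a)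
  simpa [hproj] using congrArg (fun f ↦ (f (φ.rangeRestrict a) : N)) hs

theorem kernel_wedge_square_general (A B : Type)
    [AddCommGroup A] [Module ℤ A]
    [AddCommGroup B] [Module ℤ B] [Module.Free ℤ B]
    (φ : A →ₗ[ℤ] B)
    (hsummand : ∃ q : Submodule ℤ B, IsCompl (LinearMap.range φ) q)
    (W2 : Submodule ℤ (ExteriorAlgebra ℤ A))
    (hW2 : W2 = Submodule.span ℤ
      {z : ExteriorAlgebra ℤ A | ∃ a a' : A, z = ι ℤ a * ι ℤ a'}) :
    W2 ⊓ LinearMap.ker (ExteriorAlgebra.map φ).toLinearMap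
      = Submodule.span ℤ {z : ExteriorAlgebra ℤ A |
          ∃ a k : A, k ∈ LinearMap.ker φ ∧ z = ι ℤ a * ι ℤ k} := by
  obtain ⟨q, hq⟩ := hsummand
  obtain ⟨g, hg⟩ := φ.exists_comp_comp_eq_self_of_isCompl_range hq
  subst hW2
  exact wedgeProducts_inf_ker_map_eq_wedgeKer hg

/-- Let `φ : A → B` be a homomorphism of finitely generated free
`ℤ`-modules whose image is a direct summand of `B`, with kernel `K`.  Then the
kernel of the induced map `∧²A → ∧²B` is the subgroup `A ∧ K` generated by the
elements `a ∧ k` with `a ∈ A`, `k ∈ K`.  (The second exterior powers are realised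
inside the exterior algebras, and the induced map is the algebra map of `φ`.) -/
theorem kernel_wedge_square (A B : Type)
    [AddCommGroup A] [Module ℤ A] [Module.Free ℤ A] [Module.Finite ℤ A]
    [AddCommGroup B] [Module ℤ B] [Module.Free ℤ B] [Module.Finite ℤ B]
    (φ : A →ₗ[ℤ] B)
    (hsummand : ∃ q : Submodule ℤ B, IsCompl (LinearMap.range φ) q)
    (W2 : Submodule ℤ (ExteriorAlgebra ℤ A))
    (hW2 : W2 = Submodule.span ℤ
      {z : ExteriorAlgebra ℤ A | ∃ a a' : A, z = ι ℤ a * ι ℤ a'}) :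
    W2 ⊓ LinearMap.ker (ExteriorAlgebra.map φ).toLinearMap
      = Submodule.span ℤ {z : ExteriorAlgebra ℤ A |
          ∃ a k : A, k ∈ LinearMap.ker φ ∧ z = ι ℤ a * ι ℤ k} :=
  kernel_wedge_square_general A B φ hsummand W2 hW2
end

section
/- Let H be a symplectic Z-module of rank 2g with canonical element ω and standard embedding i : H → ∧³H, h ↦ h∧ω. Suppose g ≥ 2 and let β ∈ H be a primitive vector. Let H' be a rank 2(g−1) symplectic direct summand of β^⊥ complementary to ⟨β⟩ (so β^⊥ = ⟨β⟩ ⊕ H'). Consider the map φ : ∧³(β^⊥) → (∧³H)/i(H). Then the kernel of φ restricted to ∧³(β^⊥) = (∧²H' ∧ β) ⊕ ∧³H' is infinite cyclic, generated by β ∧ ω', where ω' is the canonical element of ∧²H', and in particular Ker(φ) is contained in the factor ∧²H' ∧ β. -/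
/-!
A 3-form `f ∧ q ∧ r` whose first factor is `f = B β = b₁*` vanishes on `∧³(β^⊥)`. On `h ∧ ω` it
takes the value `f h · (q ∧ r)(ω) - q h · (f ∧ r)(ω) + r h · (f ∧ q)(ω)`, and letting `q, r` run
through coordinate functionals shows that every coordinate of `h` other than the `a₁`-coordinate
vanishes. Hence `h ∧ ω ∈ ∧³(β^⊥)` forces `h ∈ ℤ β`, and `β ∧ ω = β ∧ ω'` since `β ∧ β = 0`.
Conversely `β ∧ ω'` is the sum of the `aᵢ ∧ bᵢ ∧ β`, `i ≥ 2`, all of whose factors lie in `β^⊥`.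
-/

open ExteriorAlgebra

namespace ExteriorAlgebra

variable {R M N : Type*} [CommRing R] [AddCommGroup M] [Module R M] [AddCommGroup N] [Module R N]

theorem ι_mul_ι_mul_ι_comm (m a b : M) :
    ι R m * (ι R a * ι R b) = ι R a * ι R b * ι R m := by
  have swap (x y : M) : ι R x * ι R y = -(ι R y * ι R x) :=
    eq_neg_of_add_eq_zero_left (ι_add_mul_swap x y)
  rw [← mul_assoc, swap m a, neg_mul, mul_assoc, swap m b, mul_neg, neg_neg, ← mul_assoc]

def familyOfDegreeThree (f : M [⋀^Fin 3]→ₗ[R] N) : ∀ i : ℕ, M [⋀^Fin i]→ₗ[R] N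
  | 3 => f
  | _ => 0

def liftAlternating₃ (f : M [⋀^Fin 3]→ₗ[R] N) : ExteriorAlgebra R M →ₗ[R] N :=
  liftAlternating (familyOfDegreeThree f)

theorem liftAlternating₃_ι_mul_ι_mul_ι (f : M [⋀^Fin 3]→ₗ[R] N) (u v w : M) :
    liftAlternating₃ f (ι R u * ι R v * ι R w) = f ![u, v, w] := by
  rw [liftAlternating₃, mul_assoc, liftAlternating_ι_mul, liftAlternating_ι_mul,
    liftAlternating_ι]
  simp [familyOfDegreeThree]

theorem liftAlternating₃_ι_mul_sum {κ : Type*} (f : M [⋀^Fin 3]→ₗ[R] N) (s : Finset κ)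
    (a b : κ → M) (h : M) :
    liftAlternating₃ f (ι R h * ∑ i ∈ s, ι R (a i) * ι R (b i)) = ∑ i ∈ s, f ![h, a i, b i] := by
  simp only [Finset.mul_sum, map_sum, ← mul_assoc, liftAlternating₃_ι_mul_ι_mul_ι]

theorem liftAlternating₃_eq_zero_of_mem_span (f : M [⋀^Fin 3]→ₗ[R] N) (P : M → Prop)
    (hf : ∀ u v w, P u → P v → P w → f ![u, v, w] = 0) {x : ExteriorAlgebra R M}
    (hx : x ∈ Submodule.span R {z | ∃ u v w, P u ∧ P v ∧ P w ∧ z = ι R u * ι R v * ι R w}) :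
    liftAlternating₃ f x = 0 := by
  refine (Submodule.span_le (p := LinearMap.ker (liftAlternating₃ f))).2 ?_ hx
  rintro _ ⟨u, v, w, hu, hv, hw, rfl⟩
  exact (liftAlternating₃_ι_mul_ι_mul_ι f u v w).trans (hf u v w hu hv hw)

end ExteriorAlgebra

section DetForm

variable {R M : Type*} [CommRing R] [AddCommGroup M] [Module R M]

/-- The wedge product `p ∧ q ∧ r` of three linear forms. -/
def detForm (p q r : M →ₗ[R] R) : M [⋀^Fin 3]→ₗ[R] R :=
  Matrix.detRowAlternating.compLinearMap (LinearMap.pi ![p, q, r])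

theorem detForm_apply (p q r : M →ₗ[R] R) (u v w : M) :
    detForm p q r ![u, v, w] =
      p u * q v * r w - p u * r v * q w - q u * p v * r w
      + q u * r v * p w + r u * p v * q w - r u * q v * p w := by
  rw [detForm, AlternatingMap.compLinearMap_apply]
  show Matrix.det (.of fun i j => ![p, q, r] j (![u, v, w] i)) = _
  rw [Matrix.det_fin_three]
  simp

theorem detForm_apply_eq_zero {p : M →ₗ[R] R} (q r : M →ₗ[R] R) {u v w : M}
    (hu : p u = 0) (hv : p v = 0) (hw : p w = 0) : detForm p q r ![u, v, w] = 0 := by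
  rw [detForm_apply, hu, hv, hw]
  ring

end DetForm

section Pairing

variable {R M κ : Type*} [CommRing R] [AddCommGroup M] [Module R M] [Fintype κ]

/-- `(q ∧ r)(∑ i, a i ∧ b i)`. -/
def wedgePairing (a b : κ → M) (q r : M →ₗ[R] R) : R :=
  ∑ i, (q (a i) * r (b i) - q (b i) * r (a i))

theorem sum_detForm_apply (a b : κ → M) (p q r : M →ₗ[R] R) (h : M) :
    ∑ i, detForm p q r ![h, a i, b i] =
      p h * wedgePairing a b q r - q h * wedgePairing a b p r + r h * wedgePairing a b p q := by
  simp only [detForm_apply, wedgePairing, Finset.mul_sum, ← Finset.sum_sub_distrib,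
    ← Finset.sum_add_distrib]
  exact Finset.sum_congr rfl fun i _ => by ring

variable [DecidableEq κ] (e : Module.Basis (κ ⊕ κ) R M)

theorem wedgePairing_coord_inl (i : κ) (r : M →ₗ[R] R) :
    wedgePairing (fun i => e (.inl i)) (fun i => e (.inr i)) (e.coord (.inl i)) r =
      r (e (.inr i)) := by
  simp [wedgePairing, Finsupp.single_apply]

theorem wedgePairing_coord_inr (i : κ) (r : M →ₗ[R] R) :
    wedgePairing (fun i => e (.inl i)) (fun i => e (.inr i)) (e.coord (.inr i)) r =
      -r (e (.inl i)) := by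
  simp [wedgePairing, Finsupp.single_apply]

theorem eq_smul_basis_of_ι_mul_mem_span_ker {i₀ j : κ} (hj : j ≠ i₀) {h : M}
    (hh : ι R h * ∑ i, ι R (e (.inl i)) * ι R (e (.inr i)) ∈ Submodule.span R
      {z | ∃ u v w, e.coord (.inr i₀) u = 0 ∧ e.coord (.inr i₀) v = 0 ∧
        e.coord (.inr i₀) w = 0 ∧ z = ι R u * ι R v * ι R w}) :
    h = e.repr h (.inl i₀) • e (.inl i₀) := by
  have key (q r : M →ₗ[R] R) :
      e.repr h (.inr i₀) * wedgePairing (fun i => e (.inl i)) (fun i => e (.inr i)) q r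
        + q h * r (e (.inl i₀)) - r h * q (e (.inl i₀)) = 0 := by
    have h0 := liftAlternating₃_eq_zero_of_mem_span (detForm (e.coord (.inr i₀)) q r)
      (fun u => e.coord (.inr i₀) u = 0) (fun _ _ _ => detForm_apply_eq_zero q r) hh
    rw [liftAlternating₃_ι_mul_sum, sum_detForm_apply, wedgePairing_coord_inr,
      wedgePairing_coord_inr, Module.Basis.coord_apply] at h0
    linear_combination h0
  have h_inr : e.repr h (.inr i₀) = 0 := by
    simpa [wedgePairing_coord_inl, Finsupp.single_apply, hj] using
      key (e.coord (.inl j)) (e.coord (.inr j))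
  have h_other (s) (hs : s ≠ .inl i₀) : e.repr h s = 0 := by
    simpa [wedgePairing_coord_inl, Finsupp.single_apply, hs, h_inr] using
      key (e.coord (.inl i₀)) (e.coord s)
  refine e.ext_elem fun s => ?_
  by_cases hs : s = .inl i₀
  · simp [hs]
  · simp [h_other s hs, Ne.symm hs]

end Pairing

/-- With `β = a₁` a primitive vector of a symplectic basis of `H`
(`g ≥ 2`), `H'` the span of `{a₂,b₂,…}` (so `β^⊥ = ⟨β⟩ ⊕ H'`) and `ω'` the canonical
element of `∧²H'`, the kernel of the map `φ : ∧³(β^⊥) → (∧³H)/i(H)` (restriction of the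
quotient by the standard embedding `i : h ↦ h ∧ ω`) is infinite cyclic generated by
`β ∧ ω'`, and in particular is contained in the factor `∧²H' ∧ β`. -/
theorem kernel_of_phi_on_perp (g : ℕ) (hg : 2 ≤ g)
    (H : Type) [AddCommGroup H] [Module ℤ H]
    (e : Module.Basis (Fin g ⊕ Fin g) ℤ H)
    (B : H →ₗ[ℤ] H →ₗ[ℤ] ℤ)
    (hBab : ∀ i j : Fin g, B (e (Sum.inl i)) (e (Sum.inr j)) = if i = j then 1 else 0)
    (hBaa : ∀ i j : Fin g, B (e (Sum.inl i)) (e (Sum.inl j)) = 0)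
    (i0 : Fin g)
    (β : H) (hβ : β = e (Sum.inl i0))
    (H' : Submodule ℤ H)
    (hH' : H' = Submodule.span ℤ
      {v : H | ∃ i : Fin g, i ≠ i0 ∧ (v = e (Sum.inl i) ∨ v = e (Sum.inr i))})
    (ω ω' : ExteriorAlgebra ℤ H)
    (hω : ω = ∑ i : Fin g, ι ℤ (e (Sum.inl i)) * ι ℤ (e (Sum.inr i)))
    (hω' : ω' = ∑ i ∈ Finset.univ.erase i0,
      ι ℤ (e (Sum.inl i)) * ι ℤ (e (Sum.inr i)))
    (iH : H →ₗ[ℤ] ExteriorAlgebra ℤ H)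
    (hiH : ∀ h : H, iH h = ι ℤ h * ω)
    (W : Submodule ℤ (ExteriorAlgebra ℤ H))
    (hW : W = Submodule.span ℤ {z : ExteriorAlgebra ℤ H |
        ∃ u v w : H, B β u = 0 ∧ B β v = 0 ∧ B β w = 0 ∧
          z = ι ℤ u * ι ℤ v * ι ℤ w})
    (U : Submodule ℤ (ExteriorAlgebra ℤ H))
    (hU : U = Submodule.span ℤ {z : ExteriorAlgebra ℤ H |
        ∃ u v : H, u ∈ H' ∧ v ∈ H' ∧ z = ι ℤ u * ι ℤ v * ι ℤ β}) :
    W ⊓ LinearMap.range iH = Submodule.span ℤ {ι ℤ β * ω'}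
      ∧ W ⊓ LinearMap.range iH ≤ U := by
  have hBβ : B β = e.coord (.inr i0) := e.ext fun s => by
    rcases s with i | i <;> simp [hβ, hBaa, hBab, Finsupp.single_apply, eq_comm]
  obtain ⟨j, hj⟩ := Fintype.exists_ne_of_one_lt_card (by rw [Fintype.card_fin]; exact hg) i0
  have hiβ : iH β = ι ℤ β * ω' := by
    rw [hiH, hω, hω', ← Finset.add_sum_erase _ _ (Finset.mem_univ i0), mul_add, ← mul_assoc, hβ,
      ι_sq_zero, zero_mul, zero_add]
  have hgen : ι ℤ β * ω' ∈ W := by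
    rw [hW, hBβ, hω', Finset.mul_sum]
    refine Submodule.sum_mem _ fun i hi => Submodule.subset_span ?_
    refine ⟨β, _, _, ?_, ?_, ?_, (mul_assoc _ _ _).symm⟩ <;>
      simp [hβ, (Finset.mem_erase.1 hi).1]
  have hkernel : W ⊓ LinearMap.range iH = Submodule.span ℤ {ι ℤ β * ω'} := by
    refine le_antisymm ?_ ?_
    · rintro _ ⟨hhW, h, rfl⟩
      rw [hW, hBβ, hiH, hω] at hhW
      rw [Submodule.mem_span_singleton]
      exact ⟨e.repr h (.inl i0), by
        rw [← hiβ, ← LinearMap.map_smul, hβ]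
        exact congrArg iH (eq_smul_basis_of_ι_mul_mem_span_ker e hj hhW).symm⟩
    · rw [Submodule.span_le, Set.singleton_subset_iff]
      exact ⟨hgen, β, hiβ⟩
  refine ⟨hkernel, ?_⟩
  rw [hkernel, Submodule.span_le, Set.singleton_subset_iff, hU, hω', Finset.mul_sum]
  refine Submodule.sum_mem _ fun i hi => ?_
  have hi' : i ≠ i0 := (Finset.mem_erase.1 hi).1
  rw [ι_mul_ι_mul_ι_comm]
  refine Submodule.subset_span ⟨_, _, ?_, ?_, rfl⟩ <;> rw [hH'] <;>
    exact Submodule.subset_span ⟨i, hi', by simp⟩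
end

section
/- Let X be a simplicial complex whose vertices are equipped with a symmetric function i : V × V → Z≥0 with i(v,v) = 0, such that any finite set of vertices pairwise satisfying i ≤ 2 spans a simplex (a flag-like condition as in C^{(2)}). Suppose the subcomplex Y spanned by pairs with i = 0 (and an extra connectivity condition) is simply connected, and suppose that for any two vertices v, w with 1 ≤ i(v,w) ≤ 2 there exists a vertex u with i(v,u) = i(w,u) = 0. Then any simplicial loop in X is homotopic in X to a loop lying in Y; in particular, if Y is simply connected then X is simply connected. -/
/-- An edge path in the `1`-skeleton of the complex `K`. -/
def IsPathIn {V : Type} [DecidableEq V] (K : Set (Finset V)) : List V → Prop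
  | [] => False
  | [v] => {v} ∈ K
  | v :: w :: rest => ({v, w} : Finset V) ∈ K ∧ IsPathIn K (w :: rest)

/-- Combinatorial (edge-path) homotopy of paths in a simplicial complex `K`. -/
inductive EdgeHomotopic {V : Type} [DecidableEq V] (K : Set (Finset V)) :
    List V → List V → Prop
  | refl (p : List V) : EdgeHomotopic K p p
  | symm {p q : List V} : EdgeHomotopic K p q → EdgeHomotopic K q p
  | trans {p q r : List V} : EdgeHomotopic K p q → EdgeHomotopic K q r →
      EdgeHomotopic K p r
  | backtrack (p q : List V) (v w : V) (h : ({v, w} : Finset V) ∈ K) :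
      EdgeHomotopic K (p ++ v :: q) (p ++ v :: w :: v :: q)
  | triangle (p q : List V) (u v w : V) (h : ({u, v, w} : Finset V) ∈ K) :
      EdgeHomotopic K (p ++ u :: w :: q) (p ++ u :: v :: w :: q)

/-- A simplicial complex is simply connected if it is connected and every edge loop is
edge-homotopic to a constant loop. -/
def SimplyConnectedComplex {V : Type} [DecidableEq V] (K : Set (Finset V)) : Prop :=
  (∀ v w : V, {v} ∈ K → {w} ∈ K →
    ∃ p : List V, IsPathIn K p ∧ p.head? = some v ∧ p.getLast? = some w) ∧
  (∀ (v : V) (p : List V), IsPathIn K p → p.head? = some v → p.getLast? = some v →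
    EdgeHomotopic K p [v])

private lemma isPathIn_mono {V : Type} [DecidableEq V] {K L : Set (Finset V)}
    (hKL : K ⊆ L) : ∀ p : List V, IsPathIn K p → IsPathIn L p
  | [], h => h
  | [v], h => hKL h
  | v :: w :: rest, h => ⟨hKL h.1, isPathIn_mono hKL (w :: rest) h.2⟩

private lemma edgeHomotopic_mono {V : Type} [DecidableEq V] {K L : Set (Finset V)}
    (hKL : K ⊆ L) {p q : List V} (h : EdgeHomotopic K p q) : EdgeHomotopic L p q := by
  induction h with
  | refl p => exact EdgeHomotopic.refl p
  | symm _ ih => exact ih.symm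
  | trans _ _ ih1 ih2 => exact ih1.trans ih2
  | backtrack p q v w h => exact EdgeHomotopic.backtrack p q v w (hKL h)
  | triangle p q u v w h => exact EdgeHomotopic.triangle p q u v w (hKL h)

private lemma edgeHomotopic_cons {V : Type} [DecidableEq V] {K : Set (Finset V)}
    (a : V) {p q : List V} (h : EdgeHomotopic K p q) :
    EdgeHomotopic K (a :: p) (a :: q) := by
  induction h with
  | refl p => exact EdgeHomotopic.refl _
  | symm _ ih => exact ih.symm
  | trans _ _ ih1 ih2 => exact ih1.trans ih2
  | backtrack p q v w h => exact EdgeHomotopic.backtrack (a :: p) q v w h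
  | triangle p q u v w h => exact EdgeHomotopic.triangle (a :: p) q u v w h

/-- Let `X` be the flag-type simplicial complex on a vertex set `V`
with a symmetric intersection function `i : V × V → ℕ`, `i(v,v) = 0`, whose faces are
the finite sets of vertices pairwise satisfying `i ≤ 2`, and let `Y ⊆ X` be the
analogous complex for the condition `i = 0`.  Suppose `Y` is simply connected and for
all vertices `v,w` with `1 ≤ i(v,w) ≤ 2` there is a vertex `u` with
`i(v,u) = i(w,u) = 0`.  Then every simplicial loop in `X` is homotopic in `X` (fixing
the basepoint) to a loop lying in `Y`; in particular `X` is simply connected. -/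
theorem loops_homotope_into_zero_subcomplex {V : Type} [DecidableEq V]
    (i : V → V → ℕ) (hsymm : ∀ v w, i v w = i w v) (hrefl : ∀ v, i v v = 0)
    (X Y : Set (Finset V))
    (hX : X = {s : Finset V | s.Nonempty ∧ ∀ v ∈ s, ∀ w ∈ s, i v w ≤ 2})
    (hY : Y = {s : Finset V | s.Nonempty ∧ ∀ v ∈ s, ∀ w ∈ s, i v w = 0})
    (hYsc : SimplyConnectedComplex Y)
    (hmid : ∀ v w : V, 1 ≤ i v w → i v w ≤ 2 → ∃ u : V, i v u = 0 ∧ i w u = 0) :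
    (∀ (v : V) (p : List V), IsPathIn X p → p.head? = some v → p.getLast? = some v →
      ∃ q : List V, IsPathIn Y q ∧ q.head? = some v ∧ q.getLast? = some v ∧
        EdgeHomotopic X p q) ∧
    SimplyConnectedComplex X := by
  have hXY : Y ⊆ X := by
    intro s hs
    rw [hY] at hs
    rw [hX]
    exact ⟨hs.1, fun v hv w hw => by rw [hs.2 v hv w hw]; norm_num⟩
  have hsingY : ∀ v : V, ({v} : Finset V) ∈ Y := by
    intro v
    rw [hY]
    refine ⟨⟨v, Finset.mem_singleton_self v⟩, ?_⟩
    intro a ha b hb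
    rw [Finset.mem_singleton] at ha hb
    subst ha; subst hb; exact hrefl _
  have hpairY : ∀ a b : V, i a b = 0 → ({a, b} : Finset V) ∈ Y := by
    intro a b hab
    rw [hY]
    refine ⟨⟨a, by simp⟩, ?_⟩
    intro x hx y hy
    simp only [Finset.mem_insert, Finset.mem_singleton] at hx hy
    have hba : i b a = 0 := (hsymm b a).trans hab
    rcases hx with rfl | rfl <;> rcases hy with rfl | rfl <;>
      first | exact hrefl _ | exact hab | exact hba
  have htriX : ∀ a b c : V, i a b = 0 → i c b = 0 → i a c ≤ 2 →
      ({a, b, c} : Finset V) ∈ X := by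
    intro a b c h1 h2 h3
    rw [hX]
    refine ⟨⟨a, by simp⟩, ?_⟩
    intro x hx y hy
    simp only [Finset.mem_insert, Finset.mem_singleton] at hx hy
    have s1 : i b a = 0 := (hsymm b a).trans h1
    have s2 : i b c = 0 := (hsymm b c).trans h2
    have s3 : i c a ≤ 2 := (hsymm c a).symm ▸ h3
    rcases hx with rfl | rfl | rfl <;> rcases hy with rfl | rfl | rfl <;>
      (try simp only [hrefl]) <;> omega
  have hpairX : ∀ {a b : V}, ({a, b} : Finset V) ∈ X → i a b ≤ 2 := by
    intro a b hab
    rw [hX] at hab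
    exact hab.2 a (by simp) b (by simp)
  -- main claim
  have key : ∀ p : List V, IsPathIn X p →
      ∃ q : List V, IsPathIn Y q ∧ q.head? = p.head? ∧ q.getLast? = p.getLast? ∧
        EdgeHomotopic X p q := by
    intro p
    induction p with
    | nil => intro h; exact absurd h (by simp [IsPathIn])
    | cons v rest ih =>
      match rest, ih with
      | [], _ =>
        intro _
        exact ⟨[v], hsingY v, rfl, rfl, EdgeHomotopic.refl _⟩
      | w :: rest, ih =>
        intro hp
        obtain ⟨hvw, hp2⟩ := hp
        obtain ⟨q, hq, hqh, hql, hqhom⟩ := ih hp2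
        have hqh' : q.head? = some w := by simpa using hqh
        obtain ⟨q', rfl⟩ : ∃ q', q = w :: q' := by
          cases q with
          | nil => simp at hqh'
          | cons a q' =>
            simp only [List.head?_cons, Option.some.injEq] at hqh'
            exact ⟨q', by rw [hqh']⟩
        by_cases hz : i v w = 0
        · refine ⟨v :: w :: q', ⟨hpairY v w hz, hq⟩, rfl, ?_, edgeHomotopic_cons v hqhom⟩
          simpa using hql
        · obtain ⟨u, hu1, hu2⟩ := hmid v w (Nat.one_le_iff_ne_zero.mpr hz) (hpairX hvw)
          have htri : ({v, u, w} : Finset V) ∈ X := htriX v u w hu1 hu2 (hpairX hvw)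
          have step1 : EdgeHomotopic X (v :: w :: rest) (v :: u :: w :: rest) :=
            EdgeHomotopic.triangle [] rest v u w htri
          have step2 : EdgeHomotopic X (v :: u :: w :: rest) (v :: u :: w :: q') :=
            edgeHomotopic_cons v (edgeHomotopic_cons u hqhom)
          refine ⟨v :: u :: w :: q', ⟨hpairY v u hu1, hpairY u w (hsymm u w ▸ hu2), hq⟩,
            rfl, ?_, step1.trans step2⟩
          simpa using hql
  constructor
  · intro v p hp hph hpl
    obtain ⟨q, hq, hqh, hql, hqhom⟩ := key p hp
    exact ⟨q, hq, hqh.trans hph, hql.trans hpl, hqhom⟩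
  · constructor
    · intro v w _ _
      obtain ⟨p, hp, h1, h2⟩ := hYsc.1 v w (hsingY v) (hsingY w)
      exact ⟨p, isPathIn_mono hXY p hp, h1, h2⟩
    · intro v p hp hph hpl
      obtain ⟨q, hq, hqh, hql, hqhom⟩ := key p hp
      have := hYsc.2 v q hq (hqh.trans hph) (hql.trans hpl)
      exact hqhom.trans (edgeHomotopic_mono hXY this)
end
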